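/- arXiv:2112.07991 — 5 statements merged into one kernel-verified Lean document; each statement's English description precedes it below -/
import Mathlib

section
/- Let K be a closed convex subset of ℝⁿ. For every multi-index α and every N ∈ ℕ there is a continuous seminorm ν on the Schwartz space 𝒮(ℝⁿ) such that |∂^α φ(λ)| ≤ min(1, d(λ,∂K))^N (1+|λ|)^{−N} ν(φ) for all λ ∈ ℝⁿ and all Schwartz functions φ supported in K. -/
open Set Metric EMetric SchwartzMap
open scoped NNReal

variable {E F : Type*} [NormedAddCommGroup E] [NormedSpace ℝ E]
  [NormedAddCommGroup F] [NormedSpace ℝ F]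

lemma seg_norm_left {x y l : E} (hx : x ∈ segment ℝ y l) : ‖x - y‖ ≤ ‖l - y‖ := by
  obtain ⟨a, b, ha, hb, hab, rfl⟩ := hx
  have : a • y + b • l - y = b • (l - y) := by
    have : a = 1 - b := by linarith
    subst this
    module
  rw [this, norm_smul, Real.norm_of_nonneg hb]
  nlinarith [norm_nonneg (l - y)]

lemma taylor_zero_bound (f : E → F) (hf : ContDiff ℝ (⊤ : ℕ∞) f)
    (y l : E) (hy : ∀ k, iteratedFDeriv ℝ k f y = 0) :
    ∀ (Nn mm : ℕ) (C : ℝ), 0 ≤ C →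
      (∀ k, mm ≤ k → k ≤ mm + Nn → ∀ x ∈ segment ℝ y l, ‖iteratedFDeriv ℝ k f x‖ ≤ C) →
      ∀ x ∈ segment ℝ y l, ‖iteratedFDeriv ℝ mm f x‖ ≤ ‖l - y‖ ^ Nn * C := by
  intro Nn
  induction Nn with
  | zero => intro mm C hC0 hb x hx; simpa using hb mm le_rfl (by omega) x hx
  | succ Nn ih =>
    intro mm C hC0 hb x hx
    have hdiff : ∀ z ∈ segment ℝ y l, DifferentiableAt ℝ (iteratedFDeriv ℝ mm f) z := fun z _ =>
      (hf.differentiable_iteratedFDeriv (by exact_mod_cast (lt_top_iff_ne_top.2 (by simp) : (mm : ℕ∞) < ⊤))).differentiableAt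
    have key : ∀ z ∈ segment ℝ y l, ‖fderiv ℝ (iteratedFDeriv ℝ mm f) z‖ ≤ ‖l - y‖ ^ Nn * C := by
      intro z hz
      rw [norm_fderiv_iteratedFDeriv]
      exact ih (mm + 1) C hC0 (fun k hk1 hk2 => hb k (by omega) (by omega)) z hz
    have h2 := (convex_segment y l).norm_image_sub_le_of_norm_fderiv_le hdiff key
      (left_mem_segment ℝ y l) hx
    rw [hy mm, sub_zero] at h2
    calc ‖iteratedFDeriv ℝ mm f x‖ ≤ ‖l - y‖ ^ Nn * C * ‖x - y‖ := h2
      _ ≤ ‖l - y‖ ^ Nn * C * ‖l - y‖ :=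
          mul_le_mul_of_nonneg_left (seg_norm_left hx) (by positivity)
      _ = ‖l - y‖ ^ (Nn + 1) * C := by ring




/-- for a closed convex `K ⊆ ℝⁿ`, every constant-coefficient
derivative of order `m` (encoded as `iteratedFDeriv` applied to unit
directions, which includes all `∂^α` with `|α| = m`) of a Schwartz function
supported in `K` satisfies
`|∂^α φ(λ)| ≤ min(1,d(λ,∂K))^N (1+|λ|)^{−N} ν(φ)` for some continuous
seminorm `ν` on the Schwartz space.  The distance to the (possibly empty)
boundary is taken in `[0,∞]` via `infEdist`, so that `d(λ,∅) = ∞` and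
`min(1,d) = 1` in that case. -/
theorem stmt8 {n : ℕ} (K : Set (EuclideanSpace ℝ (Fin n)))
    (hK : IsClosed K) (hconv : Convex ℝ K) (m N : ℕ) :
    ∃ ν : Seminorm ℝ (SchwartzMap (EuclideanSpace ℝ (Fin n)) ℂ), Continuous ν ∧
      ∀ φ : SchwartzMap (EuclideanSpace ℝ (Fin n)) ℂ, Function.support φ ⊆ K →
        ∀ (l : EuclideanSpace ℝ (Fin n)) (w : Fin m → EuclideanSpace ℝ (Fin n)),
          (∀ i, ‖w i‖ = 1) →
          ‖iteratedFDeriv ℝ m (⇑φ) l w‖ ≤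
            (min 1 (EMetric.infEdist l (frontier K))).toReal ^ N *
              ((1 + ‖l‖)⁻¹) ^ N * ν φ := by
  set p : ℕ × ℕ := (N, m + N) with hp
  set s : Seminorm ℝ (SchwartzMap (EuclideanSpace ℝ (Fin n)) ℂ) := (Finset.Iic p).sup (schwartzSeminormFamily ℝ (EuclideanSpace ℝ (Fin n)) ℂ)
    with hs
  refine ⟨((2 ^ N * 2 ^ N : ℝ≥0)) • s, ?_, ?_⟩
  · -- continuity
    have hscont : Continuous ⇑s := by
      rw [hs]
      refine Seminorm.continuous_of_le (𝕝 := ℝ) ?_ (Seminorm.finset_sup_le_sum _ _)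
      change Continuous (fun x ↦ FunLike.coeAddMonoidHom _ _ _
        (∑ i ∈ Finset.Iic p, schwartzSeminormFamily ℝ (EuclideanSpace ℝ (Fin n)) ℂ i) x)
      simp_rw [map_sum, Finset.sum_apply]
      exact continuous_finset_sum _ fun i _ ↦
        (schwartz_withSeminorms ℝ (EuclideanSpace ℝ (Fin n)) ℂ).continuous_seminorm i
    rw [Seminorm.coe_smul]
    exact hscont.const_smul ((2 ^ N * 2 ^ N : ℝ≥0))
  intro φ hsupp l w hw
  have hνφ : (((2 ^ N * 2 ^ N : ℝ≥0)) • s) φ = 2 ^ N * (2 ^ N * s φ) := by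
    simp [Seminorm.smul_apply, NNReal.smul_def]
    ring
  have hsφ0 : 0 ≤ s φ := apply_nonneg _ _
  -- pointwise Schwartz bound
  have hbound : ∀ (k : ℕ), k ≤ m + N → ∀ x : EuclideanSpace ℝ (Fin n),
      (1 + ‖x‖) ^ N * ‖iteratedFDeriv ℝ k (⇑φ) x‖ ≤ 2 ^ N * s φ := fun k hk x =>
    SchwartzMap.one_add_le_sup_seminorm_apply (m := p) (le_refl N) hk φ x
  -- multilinear evaluation bound
  have hw1 : ‖iteratedFDeriv ℝ m (⇑φ) l w‖ ≤ ‖iteratedFDeriv ℝ m (⇑φ) l‖ := by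
    refine le_trans ((iteratedFDeriv ℝ m (⇑φ) l).le_opNorm w) ?_
    simp [hw]
  have hl1 : (0:ℝ) < (1 + ‖l‖) := by positivity
  have generic : ‖iteratedFDeriv ℝ m (⇑φ) l w‖ ≤
      ((1 + ‖l‖)⁻¹) ^ N * (2 ^ N * (2 ^ N * s φ)) := by
    have h0 := hbound m (by omega) l
    calc ‖iteratedFDeriv ℝ m (⇑φ) l w‖ ≤ ‖iteratedFDeriv ℝ m (⇑φ) l‖ := hw1
      _ ≤ ((1 + ‖l‖)⁻¹) ^ N * (2 ^ N * s φ) := by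
          rw [inv_pow, ← div_eq_inv_mul]
          refine (le_div_iff₀ (pow_pos hl1 N)).2 ?_
          nlinarith [h0]
      _ ≤ ((1 + ‖l‖)⁻¹) ^ N * (2 ^ N * (2 ^ N * s φ)) := by
          have h1 : (1:ℝ) ≤ 2 ^ N := one_le_pow₀ (by norm_num)
          have h2 : (2:ℝ) ^ N * s φ ≤ 2 ^ N * (2 ^ N * s φ) := by
            calc (2:ℝ) ^ N * s φ = 1 * (2 ^ N * s φ) := by ring
              _ ≤ 2 ^ N * (2 ^ N * s φ) := by
                  apply mul_le_mul_of_nonneg_right h1 (by positivity)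
          exact mul_le_mul_of_nonneg_left h2 (by positivity)
  rw [hνφ]
  rcases eq_empty_or_nonempty (frontier K) with hF | hF
  · rw [hF, show EMetric.infEdist l ∅ = ⊤ from Metric.infEDist_empty, min_eq_left le_top, ENNReal.toReal_one, one_pow, one_mul]
    exact generic
  · have hne : EMetric.infEdist l (frontier K) ≠ ⊤ := Metric.infEdist_ne_top hF
    have hmin : (min 1 (EMetric.infEdist l (frontier K))).toReal
        = min 1 (Metric.infDist l (frontier K)) := by
      rw [ENNReal.toReal_min ENNReal.one_ne_top hne, ENNReal.toReal_one]
      rfl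
    rw [hmin]
    set d := Metric.infDist l (frontier K) with hd
    have hd0 : 0 ≤ d := Metric.infDist_nonneg
    rcases le_or_gt 1 d with h1d | h1d
    · rw [min_eq_left h1d, one_pow, one_mul]
      exact generic
    · rw [min_eq_right h1d.le]
      -- nearest point
      obtain ⟨y, hyF, hdy⟩ := isClosed_frontier.exists_infDist_eq_dist hF l
      -- all derivatives vanish at y
      have hzero : ∀ (k : ℕ), ∀ x, x ∉ K → iteratedFDeriv ℝ k (⇑φ) x = 0 := by
        intro k x hx
        by_contra h
        exact hx (closure_minimal hsupp hK (support_iteratedFDeriv_subset k (by simpa using h)))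
      have hy0 : ∀ (k : ℕ), iteratedFDeriv ℝ k (⇑φ) y = 0 := by
        intro k
        have hcont : Continuous (iteratedFDeriv ℝ k (⇑φ)) :=
          (φ.smooth ⊤).continuous_iteratedFDeriv (by exact_mod_cast le_top)
        have heq : Set.EqOn (iteratedFDeriv ℝ k (⇑φ)) 0 (closure Kᶜ) :=
          Set.EqOn.closure (fun x hx => hzero k x hx) hcont continuous_const
        have hyc : y ∈ closure Kᶜ := by
          have h5 := hyF
          rw [frontier_eq_closure_inter_closure] at h5
          exact h5.2
        exact heq hyc
      -- distance facts
      have hly : ‖l - y‖ = d := by rw [hd, hdy, dist_eq_norm]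
      -- bound on segment
      have hCseg : ∀ k, m ≤ k → k ≤ m + N → ∀ x ∈ segment ℝ y l,
          ‖iteratedFDeriv ℝ k (⇑φ) x‖ ≤ ((1 + ‖l‖)⁻¹) ^ N * (2 ^ N * (2 ^ N * s φ)) := by
        intro k _ hk x hx
        have hxl : ‖x - l‖ ≤ 1 := by
          have := seg_norm_left (segment_symm ℝ y l ▸ hx)
          rw [show y - l = -(l - y) by abel, norm_neg, hly] at this
          linarith
        have hll : (1 + ‖l‖) ≤ 2 * (1 + ‖x‖) := by
          have h3 : ‖l‖ ≤ ‖x‖ + ‖x - l‖ := by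
            have h4 := norm_sub_norm_le l x
            rw [norm_sub_rev] at h4
            linarith
          linarith [norm_nonneg x]
        have hpow : (1 + ‖l‖) ^ N ≤ 2 ^ N * (1 + ‖x‖) ^ N := by
          rw [← mul_pow]
          exact pow_le_pow_left₀ (by positivity) hll N
        have hb := hbound k hk x
        have hx1 : (0:ℝ) < (1 + ‖x‖) := by positivity
        rw [inv_pow, ← div_eq_inv_mul]
        refine (le_div_iff₀ (pow_pos hl1 N)).2 ?_
        calc ‖iteratedFDeriv ℝ k (⇑φ) x‖ * (1 + ‖l‖) ^ N
            ≤ ‖iteratedFDeriv ℝ k (⇑φ) x‖ * (2 ^ N * (1 + ‖x‖) ^ N) := by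
              gcongr <;> first | exact norm_nonneg _ | positivity
          _ = 2 ^ N * ((1 + ‖x‖) ^ N * ‖iteratedFDeriv ℝ k (⇑φ) x‖) := by ring
          _ ≤ 2 ^ N * (2 ^ N * s φ) := by gcongr <;> positivity
      have hmain := taylor_zero_bound (⇑φ) (φ.smooth _) y l hy0 N m
        (((1 + ‖l‖)⁻¹) ^ N * (2 ^ N * (2 ^ N * s φ))) (by positivity) hCseg l
        (right_mem_segment ℝ y l)
      rw [hly] at hmain
      calc ‖iteratedFDeriv ℝ m (⇑φ) l w‖ ≤ ‖iteratedFDeriv ℝ m (⇑φ) l‖ := hw1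
        _ ≤ d ^ N * (((1 + ‖l‖)⁻¹) ^ N * (2 ^ N * (2 ^ N * s φ))) := hmain
        _ = d ^ N * ((1 + ‖l‖)⁻¹) ^ N * (2 ^ N * (2 ^ N * s φ)) := by ring
end

section
/- Let K be a closed convex cone in a finite-dimensional real inner product space F*. Then there is a constant C > 0 such that ⟨λ, h⟩ ≥ C |h| d(λ, ∂K) for every λ ∈ K and every h ∈ K° (the dual cone {h ∈ F : ⟨μ,h⟩ ≥ 0 for all μ ∈ K}). -/
open scoped RealInnerProductSpace

/-- for a closed convex cone `K` in a finite-dimensional real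
inner product space there is `C > 0` with `⟨λ,h⟩ ≥ C |h| d(λ,∂K)` for all
`λ ∈ K` and all `h` in the dual cone `K° = {h : ⟨μ,h⟩ ≥ 0 ∀ μ ∈ K}`
(identifying `F*` with `F` via the inner product; when `∂K = ∅`, i.e.
`K = F*`, the dual cone is `{0}` and the inequality holds trivially). -/
theorem stmt9 {V : Type*} [NormedAddCommGroup V] [InnerProductSpace ℝ V]
    [FiniteDimensional ℝ V]
    (K : Set V) (hK : IsClosed K) (hconv : Convex ℝ K)
    (hcone : ∀ t : ℝ, 0 < t → ∀ v ∈ K, t • v ∈ K) :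
    ∃ C > (0 : ℝ), ∀ l ∈ K, ∀ h : V, (∀ μ ∈ K, 0 ≤ (⟪μ, h⟫ : ℝ)) →
      C * ‖h‖ * Metric.infDist l (frontier K) ≤ (⟪l, h⟫ : ℝ) := by
  refine ⟨1, one_pos, ?_⟩
  intro l hl h hh
  have hlh : 0 ≤ (⟪l, h⟫ : ℝ) := hh l hl
  set r := Metric.infDist l (frontier K) with hrdef
  rcases le_or_gt r 0 with h0 | h0
  · nlinarith [norm_nonneg h]
  rcases eq_or_ne h 0 with rfl | hne
  · simp [hlh]
  have hnh : (0:ℝ) < ‖h‖ := norm_pos_iff.mpr hne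
  -- the ball of radius r around l is disjoint from the frontier
  have hdisj : ∀ x ∈ Metric.ball l r, x ∉ frontier K := by
    intro x hx hxf
    have h1 : r ≤ dist l x := Metric.infDist_le_dist_of_mem hxf
    rw [Metric.mem_ball, dist_comm] at hx
    linarith
  -- hence the ball lies in K
  have hball : Metric.ball l r ⊆ K := by
    have hsub : Metric.ball l r ⊆ interior K ∪ (closure K)ᶜ := by
      intro x hx
      by_cases hxc : x ∈ closure K
      · left
        have := closure_eq_interior_union_frontier K ▸ hxc
        rcases this with h' | h'
        · exact h'
        · exact absurd h' (hdisj x hx)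
      · right; exact hxc
    have hlint : l ∈ interior K := by
      have hlc : l ∈ closure K := subset_closure hl
      have := closure_eq_interior_union_frontier K ▸ hlc
      rcases this with h' | h'
      · exact h'
      · exact absurd h' (hdisj l (Metric.mem_ball_self h0))
    have hconn : IsPreconnected (Metric.ball l r) :=
      (convex_ball l r).isPreconnected
    have := hconn.subset_left_of_subset_union isOpen_interior
      (isClosed_closure).isOpen_compl
      (by
        rw [Set.disjoint_iff]
        intro x hx
        exact hx.2 (subset_closure (interior_subset hx.1)))
      hsub ⟨l, Metric.mem_ball_self h0, hlint⟩
    exact fun x hx => interior_subset (this hx)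
  -- for every 0 ≤ s < r, the point l - s • (h/‖h‖) lies in K
  have key : ∀ s : ℝ, 0 ≤ s → s < r → s * ‖h‖ ≤ (⟪l, h⟫ : ℝ) := by
    intro s hs hsr
    have hx : l - (s / ‖h‖) • h ∈ Metric.ball l r := by
      rw [Metric.mem_ball, dist_eq_norm]
      have : l - (s / ‖h‖) • h - l = -((s / ‖h‖) • h) := by abel
      rw [this, norm_neg, norm_smul, Real.norm_eq_abs, abs_of_nonneg (div_nonneg hs hnh.le),
        div_mul_cancel₀ _ hnh.ne']
      exact hsr
    have := hh _ (hball hx)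
    rw [inner_sub_left, real_inner_smul_left, real_inner_self_eq_norm_sq] at this
    have hns : s / ‖h‖ * ‖h‖ ^ 2 = s * ‖h‖ := by
      field_simp
    nlinarith
  -- conclude
  by_contra hcon
  push_neg at hcon
  have h1 : (1:ℝ) * ‖h‖ * r = r * ‖h‖ := by ring
  rw [h1] at hcon
  set s := ((⟪l, h⟫ : ℝ) / ‖h‖ + r) / 2 with hsdef
  have hs1 : (⟪l, h⟫ : ℝ) / ‖h‖ < r := (div_lt_iff₀ hnh).mpr hcon
  have hs0 : 0 ≤ s := by
    have : 0 ≤ (⟪l, h⟫ : ℝ) / ‖h‖ := div_nonneg hlh hnh.le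
    positivity
  have hsr : s < r := by rw [hsdef]; linarith
  have := key s hs0 hsr
  have : s * ‖h‖ > (⟪l, h⟫ : ℝ) := by
    rw [hsdef]
    have h2 : (⟪l, h⟫ : ℝ) = ((⟪l, h⟫ : ℝ) / ‖h‖) * ‖h‖ := by field_simp
    nlinarith
  linarith [key s hs0 hsr]
end

section
/- Let K be a closed convex cone in a finite-dimensional real inner product space V, with nonempty interior and K ≠ V. Let L = {w ∈ V : ⟨w, u⟩ ≥ 0 for all u ∈ K} be its dual cone (under the inner product identification). Then L meets the interior of K; i.e., there exists λ₀ in the interior of K such that ⟨λ₀, u⟩ ≥ 0 for every u ∈ K. -/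
/-!
If the interior of `K` missed its dual cone `L`, a functional `⟪y, ·⟫ ≠ 0` would separate them:
`⟪y, ·⟫ ≤ u` on `K` and `u ≤ ⟪y, ·⟫` on `L`. Since `L` is a cone containing `0`, this forces
`u ≤ 0` and `⟪y, ·⟫ ≥ 0` on `L`; the first makes `-y ∈ L`, and then the second gives
`-‖y‖² ≥ 0`, so `y = 0`.
-/

open scoped RealInnerProductSpace

theorem PointedCone.apply_nonneg_of_forall_le {𝕜 E : Type*} [Field 𝕜] [LinearOrder 𝕜]
    [IsStrictOrderedRing 𝕜] [AddCommGroup E] [Module 𝕜 E] (C : PointedCone 𝕜 E)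
    (f : E →ₗ[𝕜] 𝕜) {u : 𝕜} (hf : ∀ x ∈ C, u ≤ f x) {x : E} (hx : x ∈ C) : 0 ≤ f x := by
  by_contra! hneg
  have hu : u ≤ 0 := by simpa using hf 0 C.zero_mem
  -- scaling `x` by `t` pushes `f` down to `u - 1`
  set t := (u - 1) / f x
  have ht : 0 ≤ t := (div_pos_of_neg_of_neg (by linarith) hneg).le
  have := hf (t • x) (C.smul_mem ht hx)
  rw [map_smul, smul_eq_mul, div_mul_cancel₀ _ hneg.ne] at this
  linarith

theorem Convex.interior_inter_innerDual_nonempty {E : Type*} [NormedAddCommGroup E]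
    [InnerProductSpace ℝ E] [CompleteSpace E] {s : Set E} (hs : Convex ℝ s)
    (hint : (interior s).Nonempty) :
    (interior s ∩ ProperCone.innerDual s).Nonempty := by
  by_contra! hdisj
  obtain ⟨f, u, hf, hfs, hfdual⟩ := geometric_hahn_banach_of_nonempty_interior hs
    (ProperCone.innerDual s).convex (Set.disjoint_iff_inter_eq_empty.2 hdisj) hint
    ⟨0, (ProperCone.innerDual s).zero_mem⟩
  set y := (InnerProductSpace.toDual ℝ E).symm f
  have hfy (x : E) : f x = ⟪y, x⟫ := (InnerProductSpace.toDual_symm_apply).symm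
  have hu : u ≤ 0 := by simpa using hfdual 0 (ProperCone.innerDual s).zero_mem
  have hy : -y ∈ ProperCone.innerDual s := ProperCone.mem_innerDual.2 fun x hx => by
    rw [inner_neg_right, real_inner_comm, ← hfy]
    linarith [hfs x hx]
  have : 0 ≤ f (-y) :=
    (ProperCone.innerDual s).toPointedCone.apply_nonneg_of_forall_le f.toLinearMap hfdual hy
  rw [hfy, inner_neg_right, real_inner_self_eq_norm_sq] at this
  have hy0 : y = 0 := norm_eq_zero.1 (by nlinarith [norm_nonneg y])
  exact hf (by simpa [y] using hy0)

theorem stmt10_general {V : Type*} [NormedAddCommGroup V] [InnerProductSpace ℝ V]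
    [FiniteDimensional ℝ V]
    (K : Set V) (hconv : Convex ℝ K)
    (hint : (interior K).Nonempty) :
    ∃ l₀ ∈ interior K, ∀ u ∈ K, 0 ≤ (⟪l₀, u⟫ : ℝ) := by
  obtain ⟨l₀, hl₀K, hl₀L⟩ := hconv.interior_inter_innerDual_nonempty hint
  exact ⟨l₀, hl₀K, fun u hu => real_inner_comm u l₀ ▸ hl₀L hu⟩

/-- a closed convex cone `K ≠ V` with nonempty interior in a
finite-dimensional real inner product space meets its dual cone in its
interior: there is `λ₀ ∈ int K` with `⟨λ₀,u⟩ ≥ 0` for all `u ∈ K`. -/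
theorem stmt10 {V : Type*} [NormedAddCommGroup V] [InnerProductSpace ℝ V]
    [FiniteDimensional ℝ V]
    (K : Set V) (hK : IsClosed K) (hconv : Convex ℝ K)
    (hcone : ∀ t : ℝ, 0 < t → ∀ v ∈ K, t • v ∈ K)
    (hint : (interior K).Nonempty) (hne : K ≠ Set.univ) :
    ∃ l₀ ∈ interior K, ∀ u ∈ K, 0 ≤ (⟪l₀, u⟫ : ℝ) :=
  stmt10_general K hconv hint
end

section
/- Let E, F, Φ be as above, with R the radical of Φ, and suppose the cone 𝒫 = {λ ∈ F* : ⟨λ,Φ⟩ ≥ 0} has nonempty interior. Then the interior of 𝒫 equals {λ ∈ F* : ⟨λ, Φ(ζ)⟩ > 0 for all ζ ∈ E ∖ R}, and this set is nonempty and equals Λ₊ when Φ is non-degenerate; if Φ is degenerate then Λ₊ = ∅. -/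
set_option maxHeartbeats 1000000

private lemma stmt14_cauchy {E F : Type*} [NormedAddCommGroup E] [InnerProductSpace ℂ E]
    [NormedAddCommGroup F] [NormedSpace ℝ F]
    (A : E →ₗ[ℝ] E →ₗ[ℝ] F)
    (hA : ∀ ζ ζ' : E, A ζ' ζ = A ζ ζ')
    (l : F →L[ℝ] ℝ) (hl : ∀ ζ : E, 0 ≤ l (A ζ ζ)) (ζ ζ' : E) :
    l (A ζ ζ') ^ 2 ≤ l (A ζ ζ) * l (A ζ' ζ') := by
  have hq : ∀ t : ℝ, 0 ≤ l (A ζ' ζ') * (t * t) + (2 * l (A ζ ζ')) * t + l (A ζ ζ) := by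
    intro t
    have h0 := hl (ζ + t • ζ')
    have hexp : l (A (ζ + t • ζ') (ζ + t • ζ')) =
        l (A ζ' ζ') * (t * t) + (2 * l (A ζ ζ')) * t + l (A ζ ζ) := by
      simp only [map_add, map_smul, LinearMap.add_apply, LinearMap.smul_apply,
        smul_eq_mul, hA ζ ζ']
      ring
    rw [hexp] at h0
    exact h0
  have hd := discrim_le_zero hq
  rw [discrim] at hd
  nlinarith [hd]

/-- if `𝒫 = {λ : ⟨λ,Φ⟩ ≥ 0}` has nonempty interior, then
`int 𝒫 = {λ : ⟨λ,Φ(ζ)⟩ > 0 ∀ ζ ∉ R}` (with `R` the radical of `Φ`); when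
`Φ` is non-degenerate (`R = {0}`) this set is nonempty and equals `Λ₊`, and
when `Φ` is degenerate `Λ₊ = ∅`.  `Φ = A + iB` hermitian is encoded as in
the other statements, with diagonal `Φ(ζ) = A ζ ζ`. -/
theorem stmt14 {E F : Type*} [NormedAddCommGroup E] [InnerProductSpace ℂ E]
    [FiniteDimensional ℂ E] [NormedAddCommGroup F] [NormedSpace ℝ F]
    [FiniteDimensional ℝ F]
    (A B : E →ₗ[ℝ] E →ₗ[ℝ] F)
    (hA : ∀ ζ ζ' : E, A ζ' ζ = A ζ ζ') (hB : ∀ ζ ζ' : E, B ζ' ζ = - B ζ ζ')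
    (hlin : ∀ ζ ζ' : E,
      A (Complex.I • ζ) ζ' = - B ζ ζ' ∧ B (Complex.I • ζ) ζ' = A ζ ζ')
    (R : Set E) (hR : R = {ζ : E | ∀ ζ' : E, A ζ ζ' = 0 ∧ B ζ ζ' = 0})
    (P : Set (F →L[ℝ] ℝ)) (hP : P = {l : F →L[ℝ] ℝ | ∀ ζ : E, 0 ≤ l (A ζ ζ)})
    (Λ : Set (F →L[ℝ] ℝ)) (hΛ : Λ = {l : F →L[ℝ] ℝ | ∀ ζ : E, ζ ≠ 0 → 0 < l (A ζ ζ)})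
    (hint : (interior P).Nonempty) :
    interior P = {l : F →L[ℝ] ℝ | ∀ ζ : E, ζ ∉ R → 0 < l (A ζ ζ)} ∧
    (R = {0} →
      {l : F →L[ℝ] ℝ | ∀ ζ : E, ζ ∉ R → 0 < l (A ζ ζ)}.Nonempty ∧
      {l : F →L[ℝ] ℝ | ∀ ζ : E, ζ ∉ R → 0 < l (A ζ ζ)} = Λ) ∧
    (R ≠ {0} → Λ = ∅) := by
  -- continuity of the quadratic map
  have hQcont : Continuous (fun ζ : E => A ζ ζ) := by
    let L : E →ₗ[ℝ] (E →L[ℝ] F) :=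
      { toFun := fun ζ => (A ζ).toContinuousLinearMap
        map_add' := by intro x y; ext z; simp
        map_smul' := by intro c x; ext z; simp }
    have h1 : Continuous L := L.continuous_of_finiteDimensional
    have h2 : Continuous fun ζ : E => (L ζ) ζ := h1.clm_apply continuous_id
    simpa [L] using h2
  -- the radical as a real submodule
  let Rsub : Submodule ℝ E :=
    { carrier := R
      add_mem' := by
        intro a b ha hb
        have ha' : a ∈ R := ha
        have hb' : b ∈ R := hb
        rw [hR] at ha' hb'
        show a + b ∈ R
        rw [hR]
        intro ζ'
        simp only [map_add, LinearMap.add_apply, (ha' ζ').1, (ha' ζ').2,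
          (hb' ζ').1, (hb' ζ').2, add_zero, and_self]
      zero_mem' := by show (0:E) ∈ R; rw [hR]; intro ζ'; simp
      smul_mem' := by
        intro c x hx
        have hx' : x ∈ R := hx
        rw [hR] at hx'
        show c • x ∈ R
        rw [hR]
        intro ζ'
        simp only [map_smul, LinearMap.smul_apply, (hx' ζ').1, (hx' ζ').2,
          smul_zero, and_self] }
  have hRmem : ∀ x : E, x ∈ Rsub ↔ x ∈ R := fun _ => Iff.rfl
  -- forward inclusion
  have fwd : interior P ⊆ {l : F →L[ℝ] ℝ | ∀ ζ : E, ζ ∉ R → 0 < l (A ζ ζ)} := by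
    intro l hl ζ hζ
    have hlP : ∀ ζ : E, 0 ≤ l (A ζ ζ) := by
      have := interior_subset hl; rw [hP] at this; exact this
    obtain ⟨ε, hε, hball⟩ : ∃ ε > 0, Metric.ball l ε ⊆ P := by
      rcases Metric.mem_nhds_iff.1 (mem_interior_iff_mem_nhds.1 hl) with ⟨ε, hε, h⟩
      exact ⟨ε, hε, h⟩
    rcases (hlP ζ).eq_or_lt with h0 | h0
    · exfalso
      -- find w with A ζ w ≠ 0
      obtain ⟨w, hw⟩ : ∃ w : E, A ζ w ≠ 0 := by
        rw [hR] at hζ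
        simp only [Set.mem_setOf_eq, not_forall] at hζ
        obtain ⟨w, hw⟩ := hζ
        rcases not_and_or.1 hw with h | h
        · exact ⟨w, h⟩
        · refine ⟨Complex.I • w, ?_⟩
          have key : A ζ (Complex.I • w) = B ζ w := by
            rw [hA (Complex.I • w) ζ, (hlin w ζ).1, hB ζ w, neg_neg]
          rw [key]; exact h
      obtain ⟨g₀, hg₀norm, hg₀v⟩ := exists_dual_vector ℝ (A ζ w) (norm_ne_zero_iff.2 hw)
      set g : F →L[ℝ] ℝ := ‖A ζ w‖⁻¹ • g₀ with hgdef
      have hgv : g (A ζ w) = 1 := by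
        have hv : ‖A ζ w‖ ≠ 0 := norm_ne_zero_iff.2 hw
        simp only [hgdef, ContinuousLinearMap.smul_apply, hg₀v, RCLike.ofReal_real_eq_id, id, smul_eq_mul]
        field_simp
      have hlzw : l (A ζ w) = 0 := by
        have hc := stmt14_cauchy A hA l hlP ζ w
        rw [← h0] at hc
        nlinarith [sq_nonneg (l (A ζ w))]
      set δ : ℝ := ε / (2 * (‖g‖ + 1)) with hδdef
      have hδ : 0 < δ := by positivity
      set s : ℝ := if 0 ≤ g (A ζ ζ) then -δ else δ with hsdef
      have hs0 : s ≠ 0 := by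
        rw [hsdef]; split_ifs <;> [exact neg_ne_zero.2 hδ.ne'; exact hδ.ne']
      have hsle : s * g (A ζ ζ) ≤ 0 := by
        rw [hsdef]; split_ifs with h <;> nlinarith
      have hsabs : |s| = δ := by
        rw [hsdef]; split_ifs <;> simp [abs_of_pos hδ]
      set μ : F →L[ℝ] ℝ := l + s • g with hμdef
      have hμP : ∀ ζ : E, 0 ≤ μ (A ζ ζ) := by
        have : μ ∈ P := by
          apply hball
          rw [Metric.mem_ball, dist_eq_norm]
          have heq : μ - l = s • g := by rw [hμdef]; abel
          have hnrm : ‖s • g‖ = |s| * ‖g‖ :=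
            (norm_smul s g).trans (by rw [Real.norm_eq_abs])
          rw [heq, hnrm, hsabs, hδdef]
          have hg0 : 0 ≤ ‖g‖ := norm_nonneg g
          rw [div_mul_eq_mul_div, div_lt_iff₀ (by positivity)]
          nlinarith
        rw [hP] at this; exact this
      have hc := stmt14_cauchy A hA μ hμP ζ w
      have hμζw : μ (A ζ w) = s := by
        simp [hμdef, hlzw, hgv]
      have hμζζ : μ (A ζ ζ) = s * g (A ζ ζ) := by
        simp [hμdef, ← h0]
      have hww : 0 ≤ μ (A w w) := hμP w
      rw [hμζw, hμζζ] at hc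
      have h1 : s * g (A ζ ζ) * μ (A w w) ≤ 0 :=
        mul_nonpos_of_nonpos_of_nonneg hsle hww
      exact hs0 (pow_eq_zero_iff (n := 2) (by norm_num) |>.1
        (le_antisymm (hc.trans h1) (sq_nonneg s)))
    · exact h0
  -- reverse inclusion
  have rev : {l : F →L[ℝ] ℝ | ∀ ζ : E, ζ ∉ R → 0 < l (A ζ ζ)} ⊆ interior P := by
    intro l hl
    obtain ⟨W, hW⟩ := Rsub.exists_isCompl
    set π : E →ₗ[ℝ] W := W.linearProjOfIsCompl Rsub hW.symm with hπdef
    have hdecomp : ∀ ζ : E, A ζ ζ = A (π ζ : E) (π ζ : E) := by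
      intro ζ
      have hsum : (Rsub.linearProjOfIsCompl W hW ζ : E) + (W.linearProjOfIsCompl Rsub hW.symm ζ : E) = ζ :=
        Submodule.projection_add_projection_eq_self hW ζ
      set r : E := (Rsub.linearProjOfIsCompl W hW ζ : E) with hrdef
      have hrR : r ∈ R := (Rsub.linearProjOfIsCompl W hW ζ).2
      rw [hR] at hrR
      have hζeq : ζ = r + (π ζ : E) := hsum.symm
      calc A ζ ζ = A (r + (π ζ : E)) (r + (π ζ : E)) := by rw [← hζeq]
        _ = A (π ζ : E) (π ζ : E) := by
            simp only [map_add, LinearMap.add_apply, (hrR r).1, (hrR (π ζ : E)).1,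
              hA r (π ζ : E), zero_add, add_zero]
    have hmemR : ∀ ζ : E, ζ ∈ R ↔ (π ζ : E) = 0 := by
      intro ζ
      constructor
      · intro h
        have : π ζ = 0 := Submodule.projectionOnto_apply_of_mem_right hW.symm h
        rw [this]; rfl
      · intro h
        have hsum : (Rsub.linearProjOfIsCompl W hW ζ : E) + (W.linearProjOfIsCompl Rsub hW.symm ζ : E) = ζ :=
          Submodule.projection_add_projection_eq_self hW ζ
        rw [← hπdef] at hsum
        rw [h, add_zero] at hsum
        rw [← hsum]
        exact (Rsub.linearProjOfIsCompl W hW ζ).2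
    by_cases hWbot : W = ⊥
    · -- degenerate: A vanishes identically, P = univ
      have hAzero : ∀ ζ : E, A ζ ζ = 0 := by
        intro ζ
        have hz : (π ζ : E) ∈ (⊥ : Submodule ℝ E) := by
          rw [← hWbot]; exact (π ζ).2
        rw [hdecomp ζ, (Submodule.mem_bot ℝ).mp hz]; simp
      have hPuniv : P = Set.univ := by
        rw [hP]; ext μ; simp [hAzero]
      rw [hPuniv, interior_univ]; trivial
    · -- nondegenerate part: compactness on the unit sphere of W
      set K : Set E := Metric.sphere (0 : E) 1 ∩ (W : Set E) with hKdef
      have hKcomp : IsCompact K :=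
        (isCompact_sphere 0 1).inter_right W.closed_of_finiteDimensional
      have hKne : K.Nonempty := by
        obtain ⟨w, hwW, hwne⟩ := Submodule.exists_mem_ne_zero_of_ne_bot hWbot
        refine ⟨‖w‖⁻¹ • w, ?_, W.smul_mem _ hwW⟩
        simp [norm_smul, norm_ne_zero_iff.2 hwne,
          inv_mul_cancel₀ (norm_ne_zero_iff.2 hwne)]
      have hfc : ContinuousOn (fun ζ : E => l (A ζ ζ)) K :=
        (l.continuous.comp hQcont).continuousOn
      have hgc : ContinuousOn (fun ζ : E => ‖A ζ ζ‖) K := hQcont.norm.continuousOn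
      obtain ⟨w₀, hw₀K, hmin⟩ := hKcomp.exists_isMinOn hKne hfc
      obtain ⟨w₁, hw₁K, hmax⟩ := hKcomp.exists_isMaxOn hKne hgc
      set m : ℝ := l (A w₀ w₀) with hmdef
      set M : ℝ := ‖A w₁ w₁‖ with hMdef
      have hM0 : 0 ≤ M := norm_nonneg _
      have hm : 0 < m := by
        apply hl
        intro hmem
        have h1 : w₀ ∈ Rsub := hmem
        have h2 : w₀ ∈ W := hw₀K.2
        have : w₀ ∈ Rsub ⊓ W := ⟨h1, h2⟩
        rw [hW.inf_eq_bot, Submodule.mem_bot] at this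
        have hn : ‖w₀‖ = 1 := by simpa using hw₀K.1
        rw [this] at hn; simp at hn
      -- main estimate
      have claim : ∀ ζ : E, m * ‖A ζ ζ‖ ≤ (M + 1) * l (A ζ ζ) := by
        intro ζ
        set w : E := (π ζ : E) with hwdef
        have hAw : A ζ ζ = A w w := hdecomp ζ
        by_cases hw0 : w = 0
        · rw [hAw, hw0]; simp
        · set a : ℝ := ‖w‖⁻¹ with hadef
          have hna : ‖w‖ ≠ 0 := norm_ne_zero_iff.2 hw0
          have ha : 0 < a := by rw [hadef]; positivity
          have hwK : a • w ∈ K := by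
            constructor
            · simp [norm_smul, hadef, abs_of_pos ha, inv_mul_cancel₀ hna]
            · exact W.smul_mem _ (π ζ).2
          have hsc : A (a • w) (a • w) = (a * a) • A w w := by
            simp [map_smul, smul_smul]
          have h1 : m ≤ a * (a * l (A w w)) := by
            have := hmin hwK
            simpa [hsc, smul_eq_mul] using this
          have h2 : a * (a * ‖A w w‖) ≤ M := by
            have h2' : ‖A (a • w) (a • w)‖ ≤ M := hmax hwK
            have hn : ‖A (a • w) (a • w)‖ = a * (a * ‖A w w‖) := by
              rw [hsc]
              simp [norm_smul, abs_of_pos ha, mul_assoc]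
            rw [hn] at h2'
            exact h2'
          have hl0 : 0 ≤ l (A w w) := by nlinarith
          rw [hAw]
          nlinarith [mul_le_mul_of_nonneg_left h2 hl0, mul_pos (mul_pos ha ha) hm]
      set c : ℝ := m / (M + 1) with hcdef
      have hc : 0 < c := by positivity
      apply mem_interior.2
      refine ⟨Metric.ball l c, ?_, Metric.isOpen_ball, Metric.mem_ball_self hc⟩
      intro μ hμ
      rw [hP]
      intro ζ
      have hdist : ‖μ - l‖ < c := by rwa [Metric.mem_ball, dist_eq_norm] at hμ
      have heval : μ (A ζ ζ) = l (A ζ ζ) + (μ - l) (A ζ ζ) := by simp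
      have habs : |(μ - l) (A ζ ζ)| ≤ ‖μ - l‖ * ‖A ζ ζ‖ := by
        have := (μ - l).le_opNorm (A ζ ζ)
        rwa [Real.norm_eq_abs] at this
      have hcl := claim ζ
      have hnn : 0 ≤ ‖A ζ ζ‖ := norm_nonneg _
      have h3 : ‖μ - l‖ * ‖A ζ ζ‖ ≤ c * ‖A ζ ζ‖ :=
        mul_le_mul_of_nonneg_right hdist.le hnn
      have h4 : c * ‖A ζ ζ‖ ≤ l (A ζ ζ) := by
        rw [hcdef, div_mul_eq_mul_div, div_le_iff₀ (by positivity)]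
        nlinarith
      rw [heval]
      have := neg_abs_le ((μ - l) (A ζ ζ))
      linarith
  have part1 : interior P = {l : F →L[ℝ] ℝ | ∀ ζ : E, ζ ∉ R → 0 < l (A ζ ζ)} :=
    Set.Subset.antisymm fwd rev
  refine ⟨part1, ?_, ?_⟩
  · intro hz
    constructor
    · rw [← part1]; exact hint
    · rw [hΛ]
      have hiff : ∀ ζ : E, ζ ∉ R ↔ ζ ≠ 0 := by intro ζ; rw [hz]; simp
      ext μ
      simp only [Set.mem_setOf_eq]
      exact ⟨fun h ζ hζ => h ζ ((hiff ζ).2 hζ), fun h ζ hζ => h ζ ((hiff ζ).1 hζ)⟩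
  · intro hne
    have h0R : (0 : E) ∈ R := by rw [hR]; intro ζ'; simp
    obtain ⟨ζ₀, hζ₀R, hζ₀ne⟩ : ∃ ζ₀ ∈ R, ζ₀ ≠ 0 := by
      by_contra h
      push_neg at h
      exact hne (Set.eq_singleton_iff_unique_mem.2 ⟨h0R, h⟩)
    rw [hΛ]
    ext μ
    simp only [Set.mem_setOf_eq, Set.mem_empty_iff_false, iff_false]
    intro hμ
    have := hμ ζ₀ hζ₀ne
    have hz : A ζ₀ ζ₀ = 0 := by
      rw [hR] at hζ₀R; exact (hζ₀R ζ₀).1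
    rw [hz] at this
    simp at this
end

section
/- Let Ω be a nonempty open convex cone in a finite-dimensional real vector space F whose closure contains no lines (i.e., the closed dual cone has nonempty interior). Then addition restricted to the closure: + : Ω̄ × Ω̄ → Ω̄ is a proper map, and consequently if C ⊆ Ω̄ is closed then the m-fold sum C + ⋯ + C is closed for every m ≥ 1. -/
/-- if `Ω` is a nonempty open convex cone in a
finite-dimensional real vector space whose closure contains no lines
(`Ω̄ ∩ (−Ω̄) = {0}`), then addition `Ω̄ × Ω̄ → Ω̄` is a proper map (preimages of
compact sets are compact), and consequently every `m`-fold sum (`m ≥ 1`) of a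
closed subset `C ⊆ Ω̄` is closed. -/
theorem stmt16 {F : Type*} [NormedAddCommGroup F] [NormedSpace ℝ F]
    [FiniteDimensional ℝ F]
    (Ω : Set F) (hopen : IsOpen Ω) (hne : Ω.Nonempty) (hconv : Convex ℝ Ω)
    (hcone : ∀ t : ℝ, 0 < t → ∀ v ∈ Ω, t • v ∈ Ω)
    (hline : closure Ω ∩ (-closure Ω) = {0}) :
    (∀ C : Set F, IsCompact C →
      IsCompact {p : F × F | p.1 ∈ closure Ω ∧ p.2 ∈ closure Ω ∧ p.1 + p.2 ∈ C}) ∧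
    (∀ C : Set F, C ⊆ closure Ω → IsClosed C → ∀ m : ℕ, 1 ≤ m →
      IsClosed {x : F | ∃ c : Fin m → F, (∀ i, c i ∈ C) ∧ x = ∑ i, c i}) := by
  -- closure Ω is a cone
  have hclcone : ∀ t : ℝ, 0 < t → ∀ v ∈ closure Ω, t • v ∈ closure Ω := by
    intro t ht v hv
    exact map_mem_closure (continuous_const_smul t) hv (fun y hy => hcone t ht y hy)
  -- Ω is closed under addition
  have haddΩ : ∀ a ∈ Ω, ∀ b ∈ Ω, a + b ∈ Ω := by
    intro a ha b hb
    have h2 : (2 : ℝ) • ((1/2 : ℝ) • a + (1/2 : ℝ) • b) ∈ Ω := by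
      refine hcone 2 (by norm_num) _ ?_
      exact hconv ha hb (by norm_num) (by norm_num) (by norm_num)
    have : (2 : ℝ) • ((1/2 : ℝ) • a + (1/2 : ℝ) • b) = a + b := by
      rw [smul_add, smul_smul, smul_smul]; norm_num
    rwa [this] at h2
  -- closure Ω is closed under addition
  have hcladd : ∀ a ∈ closure Ω, ∀ b ∈ closure Ω, a + b ∈ closure Ω := by
    intro a ha b hb
    exact map_mem_closure₂ continuous_add ha hb haddΩ
  -- 0 ∈ closure Ω
  have h0 : (0 : F) ∈ closure Ω := by
    obtain ⟨v, hv⟩ := hne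
    have htend : Filter.Tendsto (fun t : ℝ => t • v) (nhdsWithin 0 (Set.Ioi 0)) (nhds (0 : F)) := by
      have : Filter.Tendsto (fun t : ℝ => t • v) (nhds 0) (nhds ((0 : ℝ) • v)) :=
        (continuous_id.smul continuous_const).tendsto 0
      rw [zero_smul] at this
      exact this.mono_left nhdsWithin_le_nhds
    exact mem_closure_of_tendsto htend
      (Filter.eventually_of_mem self_mem_nhdsWithin fun t ht => hcone t ht v hv)
  -- key lemma: ∃ δ > 0, ∀ x y ∈ closure Ω, δ * ‖x‖ ≤ ‖x + y‖
  have key : ∃ δ : ℝ, 0 < δ ∧ ∀ x ∈ closure Ω, ∀ y ∈ closure Ω, δ * ‖x‖ ≤ ‖x + y‖ := by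
    set K : Set (F × F) :=
      {p : F × F | p.1 ∈ closure Ω ∧ p.2 ∈ closure Ω ∧ ‖p.1‖ + ‖p.2‖ = 1} with hK
    have hKclosed : IsClosed K := by
      have h1 : IsClosed {p : F × F | p.1 ∈ closure Ω} :=
        isClosed_closure.preimage continuous_fst
      have h2 : IsClosed {p : F × F | p.2 ∈ closure Ω} :=
        isClosed_closure.preimage continuous_snd
      have h3 : IsClosed {p : F × F | ‖p.1‖ + ‖p.2‖ = 1} :=
        isClosed_eq ((continuous_fst.norm).add (continuous_snd.norm)) continuous_const
      have hKeq : K = ({p : F × F | p.1 ∈ closure Ω} ∩ {p | p.2 ∈ closure Ω}) ∩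
          {p | ‖p.1‖ + ‖p.2‖ = 1} := by
        ext p; simp [hK, and_assoc]
      rw [hKeq]
      exact (h1.inter h2).inter h3
    have hKbdd : Bornology.IsBounded K := by
      refine (isBounded_iff_forall_norm_le).2 ⟨1, fun p hp => ?_⟩
      have h1 : ‖p.1‖ ≤ 1 := by nlinarith [norm_nonneg p.1, norm_nonneg p.2, hp.2.2]
      have h2 : ‖p.2‖ ≤ 1 := by nlinarith [norm_nonneg p.1, norm_nonneg p.2, hp.2.2]
      calc ‖p‖ = max ‖p.1‖ ‖p.2‖ := rfl
        _ ≤ 1 := max_le h1 h2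
    have hKcomp : IsCompact K := Metric.isCompact_of_isClosed_isBounded hKclosed hKbdd
    -- on K, ‖p.1 + p.2‖ > 0
    have hpos : ∀ p ∈ K, 0 < ‖p.1 + p.2‖ := by
      intro p hp
      rw [norm_pos_iff]
      intro hzero
      have h1 : p.1 ∈ closure Ω ∩ (-closure Ω) := by
        refine ⟨hp.1, ?_⟩
        rw [Set.mem_neg]
        have h4 : -p.1 = p.2 := neg_eq_of_add_eq_zero_left (by rw [add_comm]; exact hzero)
        rw [h4]; exact hp.2.1
      rw [hline] at h1
      have hp1 : p.1 = 0 := h1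
      have hp2 : p.2 = 0 := by rw [hp1, zero_add] at hzero; exact hzero
      have h5 := hp.2.2
      rw [hp1, hp2, norm_zero] at h5
      norm_num at h5
    by_cases hKne : K.Nonempty
    · obtain ⟨p₀, hp₀, hmin⟩ := hKcomp.exists_isMinOn hKne
        ((continuous_fst.add continuous_snd).norm.continuousOn)
      refine ⟨‖p₀.1 + p₀.2‖, hpos p₀ hp₀, fun x hx y hy => ?_⟩
      set δ := ‖p₀.1 + p₀.2‖
      by_cases hs : ‖x‖ + ‖y‖ = 0
      · have hxn : ‖x‖ = 0 := by nlinarith [norm_nonneg x, norm_nonneg y]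
        rw [hxn, mul_zero]; exact norm_nonneg _
      · have hspos : 0 < ‖x‖ + ‖y‖ := lt_of_le_of_ne (by positivity) (Ne.symm hs)
        set s := ‖x‖ + ‖y‖
        have hmem : ((s⁻¹ • x, s⁻¹ • y) : F × F) ∈ K := by
          refine ⟨hclcone _ (by positivity) x hx, hclcone _ (by positivity) y hy, ?_⟩
          simp only [norm_smul, norm_inv, Real.norm_eq_abs, abs_of_pos hspos]
          field_simp
          rfl
        have hle : δ ≤ ‖s⁻¹ • x + s⁻¹ • y‖ := hmin hmem
        rw [← smul_add, norm_smul, norm_inv, Real.norm_eq_abs, abs_of_pos hspos] at hle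
        have : δ * s ≤ ‖x + y‖ := by
          rw [inv_mul_eq_div] at hle
          exact (le_div_iff₀ hspos).1 hle
        calc δ * ‖x‖ ≤ δ * s := by
              apply mul_le_mul_of_nonneg_left _ (le_of_lt (hpos p₀ hp₀))
              simp only [s]; linarith [norm_nonneg y]
          _ ≤ ‖x + y‖ := this
    · refine ⟨1, one_pos, fun x hx y hy => ?_⟩
      by_cases hs : ‖x‖ + ‖y‖ = 0
      · have hxn : ‖x‖ = 0 := by nlinarith [norm_nonneg x, norm_nonneg y]
        rw [hxn, mul_zero]; exact norm_nonneg _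
      · exfalso
        have hspos : 0 < ‖x‖ + ‖y‖ := lt_of_le_of_ne (by positivity) (Ne.symm hs)
        refine hKne ⟨((‖x‖ + ‖y‖)⁻¹ • x, (‖x‖ + ‖y‖)⁻¹ • y), ?_, ?_, ?_⟩
        · exact hclcone _ (by positivity) x hx
        · exact hclcone _ (by positivity) y hy
        · simp only [norm_smul, norm_inv, Real.norm_eq_abs, abs_of_pos hspos]
          field_simp
  obtain ⟨δ, hδ, hkey⟩ := key
  constructor
  · -- properness of addition
    intro C hC
    have hP : IsClosed {p : F × F | p.1 ∈ closure Ω ∧ p.2 ∈ closure Ω ∧ p.1 + p.2 ∈ C} := by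
      have h1 : IsClosed {p : F × F | p.1 ∈ closure Ω} :=
        isClosed_closure.preimage continuous_fst
      have h2 : IsClosed {p : F × F | p.2 ∈ closure Ω} :=
        isClosed_closure.preimage continuous_snd
      have h3 : IsClosed {p : F × F | p.1 + p.2 ∈ C} :=
        hC.isClosed.preimage (continuous_fst.add continuous_snd)
      have : {p : F × F | p.1 ∈ closure Ω ∧ p.2 ∈ closure Ω ∧ p.1 + p.2 ∈ C} =
          ({p : F × F | p.1 ∈ closure Ω} ∩ {p | p.2 ∈ closure Ω}) ∩ {p | p.1 + p.2 ∈ C} := by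
        ext p; simp [and_assoc]
      rw [this]
      exact (h1.inter h2).inter h3
    obtain ⟨R, hR⟩ := (isBounded_iff_forall_norm_le).1 hC.isBounded
    refine Metric.isCompact_of_isClosed_isBounded hP ?_
    refine (isBounded_iff_forall_norm_le).2 ⟨δ⁻¹ * R, fun p hp => ?_⟩
    obtain ⟨hp1, hp2, hp3⟩ := hp
    have hb1 : ‖p.1‖ ≤ δ⁻¹ * R := by
      have := hkey p.1 hp1 p.2 hp2
      have hRb := hR _ hp3
      rw [le_inv_mul_iff₀ hδ]; linarith
    have hb2 : ‖p.2‖ ≤ δ⁻¹ * R := by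
      have := hkey p.2 hp2 p.1 hp1
      rw [add_comm] at this
      have hRb := hR _ hp3
      rw [le_inv_mul_iff₀ hδ]; linarith
    calc ‖p‖ = max ‖p.1‖ ‖p.2‖ := rfl
      _ ≤ δ⁻¹ * R := max_le hb1 hb2
  · -- m-fold sums are closed
    intro C hCsub hCclosed m _hm
    rw [← isSeqClosed_iff_isClosed]
    intro u x hu hux
    -- each u n is a sum of m elements of C
    choose c hc hsum using hu
    -- each coordinate is bounded
    have hbdd : BddAbove (Set.range fun n => ‖u n‖) :=
      (hux.norm).bddAbove_range
    obtain ⟨M, hM⟩ := hbdd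
    have hM' : ∀ n, ‖u n‖ ≤ M := fun n => hM ⟨n, rfl⟩
    have hcoordbd : ∀ n i, ‖c n i‖ ≤ δ⁻¹ * M := by
      intro n i
      have hrest : ∑ j ∈ Finset.univ.erase i, c n j ∈ closure Ω := by
        refine Finset.sum_induction _ (· ∈ closure Ω) (fun a b ha hb => hcladd a ha b hb) h0 ?_
        intro j _
        exact hCsub (hc n j)
      have hkey' := hkey (c n i) (hCsub (hc n i)) _ hrest
      have heq : c n i + ∑ j ∈ Finset.univ.erase i, c n j = u n := by
        rw [add_comm, Finset.sum_erase_add _ _ (Finset.mem_univ i), ← hsum n]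
      rw [heq] at hkey'
      rw [le_inv_mul_iff₀ hδ]
      calc δ * ‖c n i‖ ≤ ‖u n‖ := hkey'
        _ ≤ M := hM' n
    -- extract a convergent subsequence of the tuples
    have hMnn : 0 ≤ δ⁻¹ * M :=
      mul_nonneg (le_of_lt (inv_pos.2 hδ)) (le_trans (norm_nonneg _) (hM' 0))
    have hmem : ∀ n, c n ∈ Metric.closedBall (0 : Fin m → F) (δ⁻¹ * M) := by
      intro n
      rw [Metric.mem_closedBall, dist_zero_right]
      exact (pi_norm_le_iff_of_nonneg hMnn).2 (hcoordbd n)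
    obtain ⟨ℓ, _, φ, hφ, hℓ⟩ :=
      tendsto_subseq_of_bounded Metric.isBounded_closedBall hmem
    refine ⟨ℓ, fun i => ?_, ?_⟩
    · -- ℓ i ∈ C
      have hti : Filter.Tendsto (fun n => c (φ n) i) Filter.atTop (nhds (ℓ i)) := by
        have := tendsto_pi_nhds.1 hℓ i
        exact this
      exact hCclosed.mem_of_tendsto hti (Filter.Eventually.of_forall fun n => hc (φ n) i)
    · -- x = ∑ ℓ i
      have h1 : Filter.Tendsto (fun n => ∑ i, c (φ n) i) Filter.atTop (nhds (∑ i, ℓ i)) := by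
        exact tendsto_finset_sum _ fun i _ => tendsto_pi_nhds.1 hℓ i
      have h2 : Filter.Tendsto (fun n => ∑ i, c (φ n) i) Filter.atTop (nhds x) := by
        have := hux.comp hφ.tendsto_atTop
        refine this.congr fun n => ?_
        exact hsum (φ n)
      exact tendsto_nhds_unique h2 h1
end
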